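/- arXiv:hep-th/9405126 — 5 statements merged into one kernel-verified Lean document; each statement's English description precedes it below -/
import Mathlib

section
/- Gauge invariance of Wilson loops (Proposition 2, second claim). Let Γ be a Hopf algebra over ℂ with antipode S, Λ an associative unital ℂ-algebra, k ≥ 1, n ≥ 1. For j = 1,…,k let g⁽ʲ⁾ ∈ Mₙ(Γ) be a matrix corepresentation, i.e. Δ((g⁽ʲ⁾)^i_j) = Σ_m (g⁽ʲ⁾)^i_m ⊗ (g⁽ʲ⁾)^m_j and ε((g⁽ʲ⁾)^i_j) = δ^i_j, with the convention g⁽ᵏ⁺¹⁾ = g⁽¹⁾. Let U⁽¹⁾, …, U⁽ᵏ⁾ ∈ Mₙ(Λ) and let Ω : Λ → Λ⊗Γ be an algebra homomorphism satisfying Ω((U⁽ʲ⁾)^p_q) = Σ_{m,l} (U⁽ʲ⁾)^m_l ⊗ (g⁽ʲ⁾)^p_m · S((g⁽ʲ⁺¹⁾)^l_q). Let u ∈ Mₙ(ℂ) satisfy the quantum-trace twist identity Σ_{i,j} u^i_j · (g⁽¹⁾)^j_p · S((g⁽¹⁾)^q_i) = u^q_p · 1_Γ for all p, q. Then the quantum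 Wilson loop tr( û · U⁽¹⁾ U⁽²⁾ ⋯ U⁽ᵏ⁾ ) ∈ Λ, with û the image of u in Mₙ(Λ), is gauge invariant: Ω( tr(û U⁽¹⁾⋯U⁽ᵏ⁾) ) = tr(û U⁽¹⁾⋯U⁽ᵏ⁾) ⊗ 1. -/
/-!
STATEMENT 3: gauge invariance of Wilson loops (Proposition 2, second claim).
Given matrix corepresentations g⁽ʲ⁾ of a Hopf algebra Γ (with g⁽ᵏ⁺¹⁾ = g⁽¹⁾),
an algebra map Ω : Λ → Λ⊗Γ acting on link matrices U⁽ʲ⁾ by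
Ω((U⁽ʲ⁾)^p_q) = Σ (U⁽ʲ⁾)^m_l ⊗ (g⁽ʲ⁾)^p_m · S((g⁽ʲ⁺¹⁾)^l_q),
and u ∈ Mₙ(ℂ) satisfying the quantum-trace twist identity, the quantum Wilson loop
tr(û·U⁽¹⁾⋯U⁽ᵏ⁾) is gauge invariant.
-/

open scoped TensorProduct

private lemma tmul_ite_aux {M N : Type*} [AddCommMonoid M] [AddCommMonoid N]
    [Module ℂ M] [Module ℂ N] (x : M) (c : Prop) [Decidable c] (a b : N) :
    x ⊗ₜ[ℂ] (if c then a else b) = if c then x ⊗ₜ[ℂ] a else x ⊗ₜ[ℂ] b := by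
  split <;> rfl

private lemma sum_swap4_aux {M : Type*} [AddCommMonoid M]
    {α β γ δ : Type*} [Fintype α] [Fintype β] [Fintype γ] [Fintype δ]
    (f : α → β → γ → δ → M) :
    (∑ i : α, ∑ j : β, ∑ m : γ, ∑ l : δ, f i j m l) =
      ∑ m : γ, ∑ l : δ, ∑ i : α, ∑ j : β, f i j m l :=
  calc (∑ i : α, ∑ j : β, ∑ m : γ, ∑ l : δ, f i j m l)
      = ∑ i : α, ∑ m : γ, ∑ j : β, ∑ l : δ, f i j m l :=
        Finset.sum_congr rfl fun i _ => Finset.sum_comm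
    _ = ∑ m : γ, ∑ i : α, ∑ j : β, ∑ l : δ, f i j m l := Finset.sum_comm
    _ = ∑ m : γ, ∑ i : α, ∑ l : δ, ∑ j : β, f i j m l :=
        Finset.sum_congr rfl fun m _ => Finset.sum_congr rfl fun i _ => Finset.sum_comm
    _ = ∑ m : γ, ∑ l : δ, ∑ i : α, ∑ j : β, f i j m l :=
        Finset.sum_congr rfl fun m _ => Finset.sum_comm

theorem wilson_loop_gauge_invariance
    {Γ : Type*} [Ring Γ] [HopfAlgebra ℂ Γ]
    {Λ : Type*} [Ring Λ] [Algebra ℂ Λ]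
    (k n : ℕ) (hk : 1 ≤ k) (hn : 1 ≤ n) [NeZero k]
    (g : Fin k → Matrix (Fin n) (Fin n) Γ)
    (hcomul : ∀ (j : Fin k) (i i' : Fin n),
      Coalgebra.comul (R := ℂ) (g j i i') = ∑ m : Fin n, g j i m ⊗ₜ[ℂ] g j m i')
    (hcounit : ∀ (j : Fin k) (i i' : Fin n),
      Coalgebra.counit (R := ℂ) (g j i i') = if i = i' then (1 : ℂ) else 0)
    (U : Fin k → Matrix (Fin n) (Fin n) Λ)
    (Ω : Λ →ₐ[ℂ] Λ ⊗[ℂ] Γ)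
    (hΩ : ∀ (j : Fin k) (p q : Fin n),
      Ω (U j p q) = ∑ m : Fin n, ∑ l : Fin n,
        U j m l ⊗ₜ[ℂ] (g j p m * HopfAlgebra.antipode (R := ℂ) (g (j + 1) l q)))
    (u : Matrix (Fin n) (Fin n) ℂ)
    (hu : ∀ p q : Fin n,
      (∑ i : Fin n, ∑ j : Fin n,
          u i j • (g 0 j p * HopfAlgebra.antipode (R := ℂ) (g 0 q i))) =
        u q p • (1 : Γ)) :
    Ω (Matrix.trace (u.map (algebraMap ℂ Λ) * ((List.finRange k).map U).prod)) =
      Matrix.trace (u.map (algebraMap ℂ Λ) * ((List.finRange k).map U).prod) ⊗ₜ[ℂ] 1 := by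
  have anti : ∀ (j : Fin k) (l m' : Fin n),
      (∑ r : Fin n, HopfAlgebra.antipode (R := ℂ) (g j l r) * g j r m') =
        if l = m' then (1 : Γ) else 0 := by
    intro j l m'
    have := HopfAlgebra.mul_antipode_rTensor_comul_apply (R := ℂ) (a := g j l m')
    rw [hcomul, hcounit] at this
    simp only [map_sum, LinearMap.rTensor_tmul, LinearMap.mul'_apply] at this
    rw [this]
    split <;> simp
  have key : ∀ d t : ℕ, (ht : t < k) → k - t = d + 1 → ∀ p q : Fin n,
      Ω (((((List.finRange k).drop t).map U).prod) p q) =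
        ∑ m : Fin n, ∑ l : Fin n,
          ((((List.finRange k).drop t).map U).prod) m l ⊗ₜ[ℂ]
            (g ⟨t, ht⟩ p m * HopfAlgebra.antipode (R := ℂ) (g 0 l q)) := by
    intro d
    induction d with
    | zero =>
      intro t ht hd p q
      have hdrop : (List.finRange k).drop t = [⟨t, ht⟩] := by
        rw [List.drop_eq_getElem_cons (by simpa using ht)]
        simp [List.getElem_finRange, List.drop_eq_nil_of_le, Fin.cast, show k ≤ t + 1 by omega]
      have hone : (⟨t, ht⟩ : Fin k) + 1 = 0 := by
        apply Fin.ext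
        rw [Fin.add_def]
        simp only [Fin.val_one', Fin.val_zero]
        rcases eq_or_lt_of_le hk with h | h
        · subst h; omega
        · rw [Nat.mod_eq_of_lt h, show t + 1 = k by omega, Nat.mod_self]
      rw [hdrop]
      simp only [List.map_cons, List.map_nil, List.prod_cons, List.prod_nil, mul_one]
      rw [hΩ, hone]
    | succ d ih =>
      intro t ht hd p q
      have ht1 : t + 1 < k := by omega
      have hk1 : 1 < k := by omega
      have hdrop : (List.finRange k).drop t = (⟨t, ht⟩ : Fin k) :: (List.finRange k).drop (t+1) := by
        rw [List.drop_eq_getElem_cons (by simpa using ht)]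
        simp [List.getElem_finRange, Fin.cast]
      have hone : (⟨t, ht⟩ : Fin k) + 1 = ⟨t + 1, ht1⟩ := by
        apply Fin.ext
        rw [Fin.add_def]
        simp [Fin.val_one', Nat.mod_eq_of_lt hk1, Nat.mod_eq_of_lt ht1]
      rw [hdrop]
      simp only [List.map_cons, List.prod_cons]
      set P : Matrix (Fin n) (Fin n) Λ := (((List.finRange k).drop (t+1)).map U).prod with hP
      have ihr : ∀ r q : Fin n, Ω (P r q) = ∑ m : Fin n, ∑ l : Fin n,
          P m l ⊗ₜ[ℂ] (g ⟨t+1, ht1⟩ r m * HopfAlgebra.antipode (R := ℂ) (g 0 l q)) :=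
        ih (t+1) ht1 (by omega)
      rw [Matrix.mul_apply, map_sum]
      calc ∑ r : Fin n, Ω (U ⟨t, ht⟩ p r * P r q)
          = ∑ r : Fin n, ∑ m : Fin n, ∑ l : Fin n, ∑ m' : Fin n, ∑ l' : Fin n,
              (U ⟨t, ht⟩ m l * P m' l') ⊗ₜ[ℂ]
                (g ⟨t, ht⟩ p m *
                  (HopfAlgebra.antipode (R := ℂ) (g ⟨t+1, ht1⟩ l r) * g ⟨t+1, ht1⟩ r m') *
                  HopfAlgebra.antipode (R := ℂ) (g 0 l' q)) := by
            refine Finset.sum_congr rfl fun r _ => ?_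
            rw [map_mul, hΩ, hone, ihr, Finset.sum_mul]
            refine Finset.sum_congr rfl fun m _ => ?_
            rw [Finset.sum_mul]
            refine Finset.sum_congr rfl fun l _ => ?_
            rw [Finset.mul_sum]
            refine Finset.sum_congr rfl fun m' _ => ?_
            rw [Finset.mul_sum]
            refine Finset.sum_congr rfl fun l' _ => ?_
            rw [Algebra.TensorProduct.tmul_mul_tmul]
            congr 1
            simp only [mul_assoc]
        _ = ∑ m : Fin n, ∑ l : Fin n, ∑ m' : Fin n, ∑ l' : Fin n,
              (U ⟨t, ht⟩ m l * P m' l') ⊗ₜ[ℂ]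
                (g ⟨t, ht⟩ p m *
                  (if l = m' then (1:Γ) else 0) *
                  HopfAlgebra.antipode (R := ℂ) (g 0 l' q)) := by
            rw [Finset.sum_comm]
            refine Finset.sum_congr rfl fun m _ => ?_
            rw [Finset.sum_comm]
            refine Finset.sum_congr rfl fun l _ => ?_
            rw [Finset.sum_comm]
            refine Finset.sum_congr rfl fun m' _ => ?_
            rw [Finset.sum_comm]
            refine Finset.sum_congr rfl fun l' _ => ?_
            rw [← anti ⟨t+1, ht1⟩ l m', Finset.mul_sum, Finset.sum_mul, ← TensorProduct.tmul_sum]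
        _ = ∑ m : Fin n, ∑ l : Fin n,
              ((U ⟨t, ht⟩ * P) m l) ⊗ₜ[ℂ]
                (g ⟨t, ht⟩ p m * HopfAlgebra.antipode (R := ℂ) (g 0 l q)) := by
            refine Finset.sum_congr rfl fun m _ => ?_
            have hcoll : ∀ l : Fin n,
                (∑ m' : Fin n, ∑ l' : Fin n,
                  (U ⟨t, ht⟩ m l * P m' l') ⊗ₜ[ℂ]
                    (g ⟨t, ht⟩ p m * (if l = m' then (1:Γ) else 0) *
                      HopfAlgebra.antipode (R := ℂ) (g 0 l' q))) =
                ∑ l' : Fin n, (U ⟨t, ht⟩ m l * P l l') ⊗ₜ[ℂ]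
                    (g ⟨t, ht⟩ p m * HopfAlgebra.antipode (R := ℂ) (g 0 l' q)) := by
              intro l
              rw [Finset.sum_comm]
              refine Finset.sum_congr rfl fun l' _ => ?_
              simp only [mul_ite, mul_one, mul_zero, ite_mul, zero_mul, tmul_ite_aux,
                TensorProduct.tmul_zero, Finset.sum_ite_eq, Finset.mem_univ, if_true]
            rw [Finset.sum_congr rfl fun l _ => hcoll l]
            rw [Finset.sum_comm]
            refine Finset.sum_congr rfl fun l' _ => ?_
            rw [Matrix.mul_apply, TensorProduct.sum_tmul]
  -- main computation
  have hzero : ((List.finRange k).map U).prod = (((List.finRange k).drop 0).map U).prod := by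
    rw [List.drop_zero]
  set P : Matrix (Fin n) (Fin n) Λ := ((List.finRange k).map U).prod with hPdef
  have keyP : ∀ p q : Fin n, Ω (P p q) = ∑ m : Fin n, ∑ l : Fin n,
      P m l ⊗ₜ[ℂ] (g 0 p m * HopfAlgebra.antipode (R := ℂ) (g 0 l q)) := by
    intro p q
    have h0 : (⟨0, by omega⟩ : Fin k) = 0 := rfl
    have := key (k - 1) 0 (by omega) (by omega) p q
    rw [List.drop_zero] at this
    exact this
  have htr : Matrix.trace (u.map (algebraMap ℂ Λ) * P) =
      ∑ i : Fin n, ∑ j : Fin n, u i j • P j i := by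
    rw [Matrix.trace]
    refine Finset.sum_congr rfl fun i _ => ?_
    rw [Matrix.diag_apply, Matrix.mul_apply]
    refine Finset.sum_congr rfl fun j _ => ?_
    rw [Matrix.map_apply, Algebra.smul_def]
  rw [htr]
  rw [map_sum]
  calc ∑ i : Fin n, Ω (∑ j : Fin n, u i j • P j i)
      = ∑ i : Fin n, ∑ j : Fin n, u i j •
          ∑ m : Fin n, ∑ l : Fin n,
            P m l ⊗ₜ[ℂ] (g 0 j m * HopfAlgebra.antipode (R := ℂ) (g 0 l i)) := by
        refine Finset.sum_congr rfl fun i _ => ?_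
        rw [map_sum]
        refine Finset.sum_congr rfl fun j _ => ?_
        rw [map_smul, keyP]
    _ = ∑ m : Fin n, ∑ l : Fin n,
          P m l ⊗ₜ[ℂ] (∑ i : Fin n, ∑ j : Fin n,
            u i j • (g 0 j m * HopfAlgebra.antipode (R := ℂ) (g 0 l i))) := by
        simp only [Finset.smul_sum]
        rw [sum_swap4_aux (f := fun i j m l => u i j •
          (P m l ⊗ₜ[ℂ] (g 0 j m * HopfAlgebra.antipode (R := ℂ) (g 0 l i))))]
        refine Finset.sum_congr rfl fun m _ => Finset.sum_congr rfl fun l _ => ?_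
        simp only [TensorProduct.tmul_sum, TensorProduct.tmul_smul]
    _ = ∑ m : Fin n, ∑ l : Fin n, (u l m • P m l) ⊗ₜ[ℂ] (1 : Γ) := by
        refine Finset.sum_congr rfl fun m _ => Finset.sum_congr rfl fun l _ => ?_
        rw [hu m l, TensorProduct.tmul_smul, TensorProduct.smul_tmul']
    _ = (∑ i : Fin n, ∑ j : Fin n, u i j • P j i) ⊗ₜ[ℂ] (1 : Γ) := by
        rw [Finset.sum_comm, TensorProduct.sum_tmul]
        exact Finset.sum_congr rfl fun i _ => by rw [TensorProduct.sum_tmul]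
end

section
/- Gauge covariance of the exchange relation (SS). Let Γ and Λ be associative unital ℂ-algebras, n, m ≥ 1. Let U ∈ Mₙ(Λ), V ∈ M_m(Λ), a, G ∈ Mₙ(Γ), b, H ∈ M_m(Γ), ℛ ∈ M_{nm}(ℂ), and let Ω : Λ → Λ⊗Γ be an algebra homomorphism with Ω(U^i_j) = Σ_{p,q} U^p_q ⊗ a^i_p G^q_j and Ω(V^i_j) = Σ_{p,q} V^p_q ⊗ b^i_p H^q_j. Assume: (i) every entry of G commutes with every entry of b and with every entry of H, and every entry of H commutes with every entry of a; (ii) ℛ · a₁ · b₂ = b₂ · a₁ · ℛ in M_{nm}(Γ); (iii) ℛ · U₁ · V₂ = V₂ · U₁ in M_{nm}(Λ). Then ℛ · Ω(U)₁ · Ω(V)₂ = Ω(V)₂ · Ω(U)₁ in M_{nm}(Λ⊗Γ). -/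
open scoped TensorProduct Kronecker
open Matrix

section Aux

variable {S T : Type*} [Ring S] [Ring T] {n m : ℕ}

private lemma kron_map' (f : S →+* T) (A : Matrix (Fin n) (Fin n) S)
    (B : Matrix (Fin m) (Fin m) S) :
    (A ⊗ₖ B).map f = (A.map f) ⊗ₖ (B.map f) := by
  ext ⟨i, j⟩ ⟨k, l⟩
  simp [Matrix.kroneckerMap_apply]

private lemma kron_one_mul' (A B : Matrix (Fin n) (Fin n) S) :
    (A * B) ⊗ₖ (1 : Matrix (Fin m) (Fin m) S) =
      (A ⊗ₖ (1 : Matrix (Fin m) (Fin m) S)) * (B ⊗ₖ (1 : Matrix (Fin m) (Fin m) S)) := by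
  ext ⟨i, j⟩ ⟨k, l⟩
  simp [Matrix.mul_apply, Matrix.kroneckerMap_apply, Fintype.sum_prod_type,
    Matrix.one_apply, Finset.sum_ite_eq, mul_ite, ite_mul, Finset.sum_mul]

private lemma one_kron_mul' (A B : Matrix (Fin m) (Fin m) S) :
    (1 : Matrix (Fin n) (Fin n) S) ⊗ₖ (A * B) =
      ((1 : Matrix (Fin n) (Fin n) S) ⊗ₖ A) * ((1 : Matrix (Fin n) (Fin n) S) ⊗ₖ B) := by
  ext ⟨i, j⟩ ⟨k, l⟩
  simp [Matrix.mul_apply, Matrix.kroneckerMap_apply, Fintype.sum_prod_type,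
    Matrix.one_apply, Finset.sum_ite_eq, mul_ite, ite_mul, Finset.sum_mul]

private lemma kron_cross_comm' (A : Matrix (Fin n) (Fin n) S) (B : Matrix (Fin m) (Fin m) S)
    (h : ∀ i j p q, Commute (A i j) (B p q)) :
    (A ⊗ₖ (1 : Matrix (Fin m) (Fin m) S)) * ((1 : Matrix (Fin n) (Fin n) S) ⊗ₖ B) =
      ((1 : Matrix (Fin n) (Fin n) S) ⊗ₖ B) * (A ⊗ₖ (1 : Matrix (Fin m) (Fin m) S)) := by
  ext ⟨i, j⟩ ⟨k, l⟩
  simp only [Matrix.mul_apply, Matrix.kroneckerMap_apply, Fintype.sum_prod_type,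
    Matrix.one_apply, mul_ite, ite_mul, mul_zero, zero_mul, mul_one, one_mul]
  rw [Finset.sum_comm]
  simp only [Finset.sum_ite_eq, Finset.sum_ite_eq', Finset.mem_univ, if_true]
  exact (h i k j l).eq

end Aux

set_option maxHeartbeats 1600000 in
theorem gauge_covariance_SS
    {Λ Γ : Type*} [Ring Λ] [Algebra ℂ Λ] [Ring Γ] [Algebra ℂ Γ]
    (n m : ℕ)
    (U : Matrix (Fin n) (Fin n) Λ) (V : Matrix (Fin m) (Fin m) Λ)
    (a G : Matrix (Fin n) (Fin n) Γ) (b H : Matrix (Fin m) (Fin m) Γ)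
    (R : Matrix (Fin n × Fin m) (Fin n × Fin m) ℂ)
    (Ω : Λ →ₐ[ℂ] Λ ⊗[ℂ] Γ)
    (hΩU : ∀ i j : Fin n,
      Ω (U i j) = ∑ p : Fin n, ∑ q : Fin n, U p q ⊗ₜ[ℂ] (a i p * G q j))
    (hΩV : ∀ i j : Fin m,
      Ω (V i j) = ∑ p : Fin m, ∑ q : Fin m, V p q ⊗ₜ[ℂ] (b i p * H q j))
    (hGb : ∀ (i j : Fin n) (p q : Fin m), Commute (G i j) (b p q))
    (hGH : ∀ (i j : Fin n) (p q : Fin m), Commute (G i j) (H p q))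
    (hHa : ∀ (i j : Fin m) (p q : Fin n), Commute (H i j) (a p q))
    (hab : R.map (algebraMap ℂ Γ) * (a ⊗ₖ (1 : Matrix (Fin m) (Fin m) Γ)) *
          ((1 : Matrix (Fin n) (Fin n) Γ) ⊗ₖ b) =
        ((1 : Matrix (Fin n) (Fin n) Γ) ⊗ₖ b) * (a ⊗ₖ (1 : Matrix (Fin m) (Fin m) Γ)) *
          R.map (algebraMap ℂ Γ))
    (hUV : R.map (algebraMap ℂ Λ) * (U ⊗ₖ (1 : Matrix (Fin m) (Fin m) Λ)) *
          ((1 : Matrix (Fin n) (Fin n) Λ) ⊗ₖ V) =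
        ((1 : Matrix (Fin n) (Fin n) Λ) ⊗ₖ V) * (U ⊗ₖ (1 : Matrix (Fin m) (Fin m) Λ))) :
    R.map (algebraMap ℂ (Λ ⊗[ℂ] Γ)) *
        (U.map ⇑Ω ⊗ₖ (1 : Matrix (Fin m) (Fin m) (Λ ⊗[ℂ] Γ))) *
        ((1 : Matrix (Fin n) (Fin n) (Λ ⊗[ℂ] Γ)) ⊗ₖ V.map ⇑Ω) =
      ((1 : Matrix (Fin n) (Fin n) (Λ ⊗[ℂ] Γ)) ⊗ₖ V.map ⇑Ω) *
        (U.map ⇑Ω ⊗ₖ (1 : Matrix (Fin m) (Fin m) (Λ ⊗[ℂ] Γ))) := by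
  classical
  set f1 : Λ →+* Λ ⊗[ℂ] Γ :=
    (Algebra.TensorProduct.includeLeft : Λ →ₐ[ℂ] Λ ⊗[ℂ] Γ).toRingHom with hf1
  set f2 : Γ →+* Λ ⊗[ℂ] Γ :=
    (Algebra.TensorProduct.includeRight : Γ →ₐ[ℂ] Λ ⊗[ℂ] Γ).toRingHom with hf2
  have hf1app : ∀ x : Λ, f1 x = x ⊗ₜ[ℂ] 1 := fun x =>
    Algebra.TensorProduct.includeLeft_apply x
  have hf2app : ∀ g : Γ, f2 g = (1 : Λ) ⊗ₜ[ℂ] g := fun g =>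
    Algebra.TensorProduct.includeRight_apply g
  -- factorization of Ω(U) and Ω(V)
  have hU' : U.map ⇑Ω = a.map f2 * U.map f1 * G.map f2 := by
    ext i j
    rw [Matrix.map_apply, hΩU]
    simp only [Matrix.mul_apply, Matrix.map_apply, hf1app, hf2app,
      Finset.sum_mul, Finset.mul_sum, Algebra.TensorProduct.tmul_mul_tmul,
      one_mul, mul_one]
    exact Finset.sum_comm
  have hV' : V.map ⇑Ω = b.map f2 * V.map f1 * H.map f2 := by
    ext i j
    rw [Matrix.map_apply, hΩV]
    simp only [Matrix.mul_apply, Matrix.map_apply, hf1app, hf2app,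
      Finset.sum_mul, Finset.mul_sum, Algebra.TensorProduct.tmul_mul_tmul,
      one_mul, mul_one]
    exact Finset.sum_comm
  -- abbreviations
  set R' : Matrix (Fin n × Fin m) (Fin n × Fin m) (Λ ⊗[ℂ] Γ) :=
    R.map (algebraMap ℂ (Λ ⊗[ℂ] Γ)) with hR'
  set A1 := (a.map f2) ⊗ₖ (1 : Matrix (Fin m) (Fin m) (Λ ⊗[ℂ] Γ)) with hA1
  set U1 := (U.map f1) ⊗ₖ (1 : Matrix (Fin m) (Fin m) (Λ ⊗[ℂ] Γ)) with hU1
  set G1 := (G.map f2) ⊗ₖ (1 : Matrix (Fin m) (Fin m) (Λ ⊗[ℂ] Γ)) with hG1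
  set B2 := (1 : Matrix (Fin n) (Fin n) (Λ ⊗[ℂ] Γ)) ⊗ₖ (b.map f2) with hB2
  set V2 := (1 : Matrix (Fin n) (Fin n) (Λ ⊗[ℂ] Γ)) ⊗ₖ (V.map f1) with hV2
  set H2 := (1 : Matrix (Fin n) (Fin n) (Λ ⊗[ℂ] Γ)) ⊗ₖ (H.map f2) with hH2
  -- push hab to Λ ⊗ Γ
  have hmapR2 : (R.map (algebraMap ℂ Γ)).map f2 = R' := by
    ext ij kl
    simp only [Matrix.map_apply, Matrix.map_map, Function.comp_apply, hR']
    exact (Algebra.TensorProduct.includeRight : Γ →ₐ[ℂ] Λ ⊗[ℂ] Γ).commutes _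
  have hmapR1 : (R.map (algebraMap ℂ Λ)).map f1 = R' := by
    ext ij kl
    simp only [Matrix.map_apply, Matrix.map_map, Function.comp_apply, hR']
    exact (Algebra.TensorProduct.includeLeft : Λ →ₐ[ℂ] Λ ⊗[ℂ] Γ).commutes _
  have hab' : R' * A1 * B2 = B2 * A1 * R' := by
    have := congrArg (fun M : Matrix (Fin n × Fin m) (Fin n × Fin m) Γ => M.map f2) hab
    simpa only [Matrix.map_mul, kron_map', Matrix.map_one f2 f2.map_zero f2.map_one,
      hmapR2, hA1, hB2] using this
  have hUV' : R' * U1 * V2 = V2 * U1 := by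
    have := congrArg (fun M : Matrix (Fin n × Fin m) (Fin n × Fin m) Λ => M.map f1) hUV
    simpa only [Matrix.map_mul, kron_map', Matrix.map_one f1 f1.map_zero f1.map_one,
      hmapR1, hU1, hV2] using this
  -- commuting pairs
  have comm12 : ∀ (g : Γ) (x : Λ), Commute (f2 g) (f1 x) := by
    intro g x
    simp only [hf1app, hf2app, Commute, SemiconjBy, Algebra.TensorProduct.tmul_mul_tmul,
      one_mul, mul_one]
  have c1 : G1 * B2 = B2 * G1 :=
    kron_cross_comm' _ _ (fun i j p q => (hGb i j p q).map f2)
  have c2 : G1 * V2 = V2 * G1 :=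
    kron_cross_comm' _ _ (fun i j p q => comm12 (G i j) (V p q))
  have c3 : G1 * H2 = H2 * G1 :=
    kron_cross_comm' _ _ (fun i j p q => (hGH i j p q).map f2)
  have c4 : U1 * B2 = B2 * U1 :=
    kron_cross_comm' _ _ (fun i j p q => (comm12 (b p q) (U i j)).symm)
  have c5 : A1 * V2 = V2 * A1 :=
    kron_cross_comm' _ _ (fun i j p q => comm12 (a i j) (V p q))
  have c6 : U1 * H2 = H2 * U1 :=
    kron_cross_comm' _ _ (fun i j p q => (comm12 (H p q) (U i j)).symm)
  have c7 : A1 * H2 = H2 * A1 :=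
    kron_cross_comm' _ _ (fun i j p q => ((hHa p q i j).symm).map f2)
  -- rewrite the goal in terms of the slot matrices
  rw [hU', hV', kron_one_mul', kron_one_mul', one_kron_mul', one_kron_mul']
  -- now the goal is R' * (A1 * U1 * G1) * (B2 * (V2 * H2)) = ...
  have swap : ∀ {X Y : Matrix (Fin n × Fin m) (Fin n × Fin m) (Λ ⊗[ℂ] Γ)},
      X * Y = Y * X → ∀ Z, X * (Y * Z) = Y * (X * Z) := by
    intro X Y h Z
    rw [← mul_assoc, h, mul_assoc]
  have habX : ∀ Z, R' * (A1 * (B2 * Z)) = B2 * (A1 * (R' * Z)) := by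
    intro Z
    calc R' * (A1 * (B2 * Z)) = (R' * A1 * B2) * Z := by simp only [mul_assoc]
    _ = (B2 * A1 * R') * Z := by rw [hab']
    _ = B2 * (A1 * (R' * Z)) := by simp only [mul_assoc]
  have hUVX : ∀ Z, R' * (U1 * (V2 * Z)) = V2 * (U1 * Z) := by
    intro Z
    calc R' * (U1 * (V2 * Z)) = (R' * U1 * V2) * Z := by simp only [mul_assoc]
    _ = (V2 * U1) * Z := by rw [hUV']
    _ = V2 * (U1 * Z) := by rw [mul_assoc]
  show R' * (A1 * U1 * G1) * (B2 * V2 * H2) = B2 * V2 * H2 * (A1 * U1 * G1)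
  calc R' * (A1 * U1 * G1) * (B2 * V2 * H2)
      = R' * (A1 * (U1 * (G1 * (B2 * (V2 * H2))))) := by simp only [mul_assoc]
    _ = R' * (A1 * (U1 * (B2 * (G1 * (V2 * H2))))) := by rw [swap c1]
    _ = R' * (A1 * (U1 * (B2 * (V2 * (G1 * H2))))) := by rw [swap c2]
    _ = R' * (A1 * (U1 * (B2 * (V2 * (H2 * G1))))) := by rw [c3]
    _ = R' * (A1 * (B2 * (U1 * (V2 * (H2 * G1))))) := by rw [swap c4]
    _ = B2 * (A1 * (R' * (U1 * (V2 * (H2 * G1))))) := by rw [habX]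
    _ = B2 * (A1 * (V2 * (U1 * (H2 * G1)))) := by rw [hUVX]
    _ = B2 * (V2 * (A1 * (U1 * (H2 * G1)))) := by rw [swap c5]
    _ = B2 * (V2 * (A1 * (H2 * (U1 * G1)))) := by rw [swap c6]
    _ = B2 * (V2 * (H2 * (A1 * (U1 * G1)))) := by rw [swap c7]
    _ = B2 * V2 * H2 * (A1 * U1 * G1) := by simp only [mul_assoc]
end

section
/- Braid relation for holonomies (induction step in the proof of Proposition 3). Let Λ be an associative unital ℂ-algebra, n_α, n_β ≥ 1, m ≥ 1. Let U₁, …, U_m ∈ M_{n_α}(Λ) and V₁, …, V_m ∈ M_{n_β}(Λ), and let R, R′ ∈ M_{n_α n_β}(ℂ) be invertible (acting on two slots, the first of size n_α and the second of size n_β). Assume: (a) for every j, R·(U_j)₁·(V_j)₂ = (V_j)₂·(U_j)₁·R′ (same-link exchange relation); (b) for every j < m, (U_j)₁·R⁻¹·(V_{j+1})₂ = (V_{j+1})₂·(U_j)₁; (c) for every j < m, (V_j)₂·R′⁻¹·(U_{j+1})₁ = (U_{j+1})₁·(V_j)₂ (consecutive-link exchange relations); (d) every entry of U_i commutes with every entry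 of V_j whenever |i−j| ≥ 2 (non-adjacent links commute). Then the holonomies M := U₁U₂⋯U_m and M′ := V₁V₂⋯V_m satisfy R·M₁·M′₂ = M′₂·M₁·R′ in M_{n_α n_β}(Λ). -/
/-!
Peel off the last link and induct. Let `P, Q` be the holonomies of the first links (in slots 1
and 2) and `a, b` the next link. Relations (c) and (d) give `a Q = Q R′⁻¹ a`, and (b) and (d)
give `P R⁻¹ b = b P`. With the induction hypothesis `R P Q = Q P R′` and (a) for the new link,
`R (P a) (Q b) = R P Q R′⁻¹ a b = Q P a b = Q P R⁻¹ (R a b) = Q P R⁻¹ b a R′`, which is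
`(Q b) (P a) R′`.
-/

open scoped Kronecker

theorem List.map_finRange_eq_map_range {α : Type*} {m : ℕ} {f : Fin m → α} {g : ℕ → α}
    (h : ∀ i : Fin m, g i = f i) : (finRange m).map f = (range m).map g := by
  rw [← map_coe_finRange_eq_range, map_map]
  exact map_congr_left fun i _ => (h i).symm

section Braid

variable {M : Type*} [Monoid M] {a b : ℕ → M}

theorem exchange_prod_range_left {s : M} {n : ℕ}
    (hadj : a n * s * b (n + 1) = b (n + 1) * a n)
    (hfar : ∀ i < n, Commute (a i) (b (n + 1))) :
    ((List.range (n + 1)).map a).prod * s * b (n + 1) =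
      b (n + 1) * ((List.range (n + 1)).map a).prod := by
  have hP : Commute ((List.range n).map a).prod (b (n + 1)) :=
    Commute.list_prod_left _ _ (by simpa using hfar)
  rw [List.prod_range_succ, mul_assoc _ (a n), mul_assoc, hadj, ← mul_assoc, hP.eq, mul_assoc]

theorem exchange_prod_range_right {s : M} {n : ℕ}
    (hadj : b n * s * a (n + 1) = a (n + 1) * b n)
    (hfar : ∀ i < n, Commute (a (n + 1)) (b i)) :
    a (n + 1) * ((List.range (n + 1)).map b).prod =
      ((List.range (n + 1)).map b).prod * s * a (n + 1) := by
  have hQ : Commute (a (n + 1)) ((List.range n).map b).prod :=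
    Commute.list_prod_right _ _ (by simpa using hfar)
  rw [List.prod_range_succ, ← mul_assoc, hQ.eq, mul_assoc, ← hadj]
  simp only [mul_assoc]

theorem braid_prod_range {r r' rinv r'inv : M} (hr : rinv * r = 1) (hr' : r' * r'inv = 1)
    (n : ℕ)
    (ha : ∀ j ≤ n, r * a j * b j = b j * a j * r')
    (hb : ∀ j < n, a j * rinv * b (j + 1) = b (j + 1) * a j)
    (hc : ∀ j < n, b j * r'inv * a (j + 1) = a (j + 1) * b j)
    (hd : ∀ i ≤ n, ∀ j ≤ n, i + 2 ≤ j ∨ j + 2 ≤ i → Commute (a i) (b j)) :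
    r * ((List.range (n + 1)).map a).prod * ((List.range (n + 1)).map b).prod =
      ((List.range (n + 1)).map b).prod * ((List.range (n + 1)).map a).prod * r' := by
  induction n with
  | zero => simpa using ha 0 le_rfl
  | succ n ih =>
    set P := ((List.range (n + 1)).map a).prod
    set Q := ((List.range (n + 1)).map b).prod
    have hPQ : r * P * Q = Q * P * r' :=
      ih (fun j hj => ha j (by omega)) (fun j hj => hb j (by omega))
        (fun j hj => hc j (by omega)) (fun i hi j hj => hd i (by omega) j (by omega))
    have haQ : a (n + 1) * Q = Q * r'inv * a (n + 1) :=
      exchange_prod_range_right (hc n (by omega)) fun i hi => hd _ le_rfl i (by omega) (by omega)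
    have hPb : P * rinv * b (n + 1) = b (n + 1) * P :=
      exchange_prod_range_left (hb n (by omega)) fun i hi => hd i (by omega) _ le_rfl (by omega)
    rw [List.prod_range_succ a, List.prod_range_succ b]
    calc r * (P * a (n + 1)) * (Q * b (n + 1))
        = r * P * (Q * r'inv * a (n + 1)) * b (n + 1) := by rw [← haQ]; simp only [mul_assoc]
      _ = Q * P * r' * r'inv * a (n + 1) * b (n + 1) := by rw [← hPQ]; simp only [mul_assoc]
      _ = Q * P * rinv * r * a (n + 1) * b (n + 1) := by
          rw [mul_assoc (Q * P) r', hr', mul_assoc (Q * P) rinv, hr]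
      _ = Q * P * rinv * (b (n + 1) * a (n + 1) * r') := by
          rw [← ha _ le_rfl]; simp only [mul_assoc]
      _ = Q * (b (n + 1) * P) * a (n + 1) * r' := by rw [← hPb]; simp only [mul_assoc]
      _ = Q * b (n + 1) * (P * a (n + 1)) * r' := by simp only [mul_assoc]

theorem braid_prod_finRange {N : ℕ} (hN : 1 ≤ N) {a b : Fin N → M} {r r' rinv r'inv : M}
    (hr : rinv * r = 1) (hr' : r' * r'inv = 1)
    (ha : ∀ j, r * a j * b j = b j * a j * r')
    (hb : ∀ i j : Fin N, (i : ℕ) + 1 = j → a i * rinv * b j = b j * a i)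
    (hc : ∀ i j : Fin N, (i : ℕ) + 1 = j → b i * r'inv * a j = a j * b i)
    (hd : ∀ i j : Fin N, (i : ℕ) + 2 ≤ j ∨ (j : ℕ) + 2 ≤ i → Commute (a i) (b j)) :
    r * ((List.finRange N).map a).prod * ((List.finRange N).map b).prod =
      ((List.finRange N).map b).prod * ((List.finRange N).map a).prod * r' := by
  obtain ⟨n, rfl⟩ : ∃ n, N = n + 1 := ⟨N - 1, by omega⟩
  let extend (c : Fin (n + 1) → M) (j : ℕ) : M := if h : j < n + 1 then c ⟨j, h⟩ else 1
  have extend_of_lt (c : Fin (n + 1) → M) {j : ℕ} (h : j < n + 1) : extend c j = c ⟨j, h⟩ :=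
    dif_pos h
  rw [List.map_finRange_eq_map_range (g := extend a) fun i => extend_of_lt a i.isLt,
    List.map_finRange_eq_map_range (g := extend b) fun i => extend_of_lt b i.isLt]
  refine braid_prod_range hr hr' n (fun j hj => ?_) (fun j hj => ?_) (fun j hj => ?_)
    (fun i hi j hj hij => ?_)
  · simpa only [extend_of_lt _ (Nat.lt_succ_of_le hj)] using ha ⟨j, by omega⟩
  · simpa only [extend_of_lt _ (Nat.lt_succ_of_lt hj), extend_of_lt _ (Nat.succ_lt_succ hj)]
      using hb ⟨j, by omega⟩ ⟨j + 1, by omega⟩ rfl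
  · simpa only [extend_of_lt _ (Nat.lt_succ_of_lt hj), extend_of_lt _ (Nat.succ_lt_succ hj)]
      using hc ⟨j, by omega⟩ ⟨j + 1, by omega⟩ rfl
  · simpa only [extend_of_lt _ (Nat.lt_succ_of_le hi), extend_of_lt _ (Nat.lt_succ_of_le hj)]
      using hd ⟨i, by omega⟩ ⟨j, by omega⟩ hij

end Braid

namespace Matrix

variable {l m n p α : Type*} [Semiring α]

theorem mul_kronecker_one [Fintype m] [Fintype n] [DecidableEq n]
    (A : Matrix l m α) (B : Matrix m p α) :
    (A * B) ⊗ₖ (1 : Matrix n n α) =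
      A ⊗ₖ (1 : Matrix n n α) * B ⊗ₖ (1 : Matrix n n α) := by
  simp only [kronecker_one, ← blockDiagonal_mul]

theorem one_kronecker_mul [Fintype l] [Fintype m] [DecidableEq l]
    (A : Matrix n m α) (B : Matrix m p α) :
    (1 : Matrix l l α) ⊗ₖ (A * B) =
      (1 : Matrix l l α) ⊗ₖ A * (1 : Matrix l l α) ⊗ₖ B := by
  simp only [one_kronecker, reindex_apply, submatrix_mul_equiv, ← blockDiagonal_mul]

theorem list_prod_kronecker_one [Fintype m] [Fintype n] [DecidableEq m] [DecidableEq n]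
    (L : List (Matrix m m α)) :
    L.prod ⊗ₖ (1 : Matrix n n α) = (L.map (· ⊗ₖ (1 : Matrix n n α))).prod := by
  induction L with
  | nil => exact one_kronecker_one
  | cons A L ih => rw [List.prod_cons, mul_kronecker_one, ih, List.map_cons, List.prod_cons]

theorem one_kronecker_list_prod [Fintype l] [Fintype m] [DecidableEq l] [DecidableEq m]
    (L : List (Matrix m m α)) :
    (1 : Matrix l l α) ⊗ₖ L.prod = (L.map ((1 : Matrix l l α) ⊗ₖ ·)).prod := by
  induction L with
  | nil => exact one_kronecker_one
  | cons A L ih => rw [List.prod_cons, one_kronecker_mul, ih, List.map_cons, List.prod_cons]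

theorem commute_kronecker_one_one_kronecker [Fintype m] [Fintype n] [DecidableEq m]
    [DecidableEq n] {A : Matrix m m α} {B : Matrix n n α}
    (h : ∀ i j k l, Commute (A i j) (B k l)) :
    Commute (A ⊗ₖ (1 : Matrix n n α)) ((1 : Matrix m m α) ⊗ₖ B) := by
  ext ⟨i, k⟩ ⟨j, l⟩
  simp [mul_apply, one_apply, Fintype.sum_prod_type, ite_mul, mul_ite, (h i j k l).eq]

end Matrix

theorem holonomy_braid_relation_general
    {Λ : Type*} [Ring Λ] [Algebra ℂ Λ]
    (nα nβ m : ℕ) (hm : 1 ≤ m)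
    (U : Fin m → Matrix (Fin nα) (Fin nα) Λ)
    (V : Fin m → Matrix (Fin nβ) (Fin nβ) Λ)
    (R R' Rinv R'inv : Matrix (Fin nα × Fin nβ) (Fin nα × Fin nβ) ℂ)
    (hRinv' : Rinv * R = 1)
    (hR'inv : R' * R'inv = 1)
    -- (a) same-link exchange relation
    (ha : ∀ j : Fin m,
      R.map (algebraMap ℂ Λ) * (U j ⊗ₖ (1 : Matrix (Fin nβ) (Fin nβ) Λ)) *
          ((1 : Matrix (Fin nα) (Fin nα) Λ) ⊗ₖ V j) =
        ((1 : Matrix (Fin nα) (Fin nα) Λ) ⊗ₖ V j) *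
          (U j ⊗ₖ (1 : Matrix (Fin nβ) (Fin nβ) Λ)) * R'.map (algebraMap ℂ Λ))
    -- (b) consecutive-link exchange relation
    (hb : ∀ i j : Fin m, (i : ℕ) + 1 = (j : ℕ) →
      (U i ⊗ₖ (1 : Matrix (Fin nβ) (Fin nβ) Λ)) * Rinv.map (algebraMap ℂ Λ) *
          ((1 : Matrix (Fin nα) (Fin nα) Λ) ⊗ₖ V j) =
        ((1 : Matrix (Fin nα) (Fin nα) Λ) ⊗ₖ V j) *
          (U i ⊗ₖ (1 : Matrix (Fin nβ) (Fin nβ) Λ)))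
    -- (c) consecutive-link exchange relation
    (hc : ∀ i j : Fin m, (i : ℕ) + 1 = (j : ℕ) →
      ((1 : Matrix (Fin nα) (Fin nα) Λ) ⊗ₖ V i) * R'inv.map (algebraMap ℂ Λ) *
          (U j ⊗ₖ (1 : Matrix (Fin nβ) (Fin nβ) Λ)) =
        (U j ⊗ₖ (1 : Matrix (Fin nβ) (Fin nβ) Λ)) *
          ((1 : Matrix (Fin nα) (Fin nα) Λ) ⊗ₖ V i))
    -- (d) non-adjacent links commute entrywise
    (hd : ∀ i j : Fin m, ((i : ℕ) + 2 ≤ (j : ℕ) ∨ (j : ℕ) + 2 ≤ (i : ℕ)) →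
      ∀ (p q : Fin nα) (r s : Fin nβ), Commute (U i p q) (V j r s)) :
    R.map (algebraMap ℂ Λ) *
        (((List.finRange m).map U).prod ⊗ₖ (1 : Matrix (Fin nβ) (Fin nβ) Λ)) *
        ((1 : Matrix (Fin nα) (Fin nα) Λ) ⊗ₖ ((List.finRange m).map V).prod) =
      ((1 : Matrix (Fin nα) (Fin nα) Λ) ⊗ₖ ((List.finRange m).map V).prod) *
        (((List.finRange m).map U).prod ⊗ₖ (1 : Matrix (Fin nβ) (Fin nβ) Λ)) *
        R'.map (algebraMap ℂ Λ) := by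
  have hr : Rinv.map (algebraMap ℂ Λ) * R.map (algebraMap ℂ Λ) = 1 := by
    rw [← Matrix.map_mul, hRinv', Matrix.map_one _ (map_zero _) (map_one _)]
  have hr' : R'.map (algebraMap ℂ Λ) * R'inv.map (algebraMap ℂ Λ) = 1 := by
    rw [← Matrix.map_mul, hR'inv, Matrix.map_one _ (map_zero _) (map_one _)]
  rw [Matrix.list_prod_kronecker_one, Matrix.one_kronecker_list_prod, List.map_map, List.map_map]
  exact braid_prod_finRange hm hr hr' ha hb hc fun i j hij =>
    Matrix.commute_kronecker_one_one_kronecker (hd i j hij)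

theorem holonomy_braid_relation
    {Λ : Type*} [Ring Λ] [Algebra ℂ Λ]
    (nα nβ m : ℕ) (hnα : 1 ≤ nα) (hnβ : 1 ≤ nβ) (hm : 1 ≤ m)
    (U : Fin m → Matrix (Fin nα) (Fin nα) Λ)
    (V : Fin m → Matrix (Fin nβ) (Fin nβ) Λ)
    (R R' Rinv R'inv : Matrix (Fin nα × Fin nβ) (Fin nα × Fin nβ) ℂ)
    (hRinv : R * Rinv = 1) (hRinv' : Rinv * R = 1)
    (hR'inv : R' * R'inv = 1) (hR'inv' : R'inv * R' = 1)
    -- (a) same-link exchange relation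
    (ha : ∀ j : Fin m,
      R.map (algebraMap ℂ Λ) * (U j ⊗ₖ (1 : Matrix (Fin nβ) (Fin nβ) Λ)) *
          ((1 : Matrix (Fin nα) (Fin nα) Λ) ⊗ₖ V j) =
        ((1 : Matrix (Fin nα) (Fin nα) Λ) ⊗ₖ V j) *
          (U j ⊗ₖ (1 : Matrix (Fin nβ) (Fin nβ) Λ)) * R'.map (algebraMap ℂ Λ))
    -- (b) consecutive-link exchange relation
    (hb : ∀ i j : Fin m, (i : ℕ) + 1 = (j : ℕ) →
      (U i ⊗ₖ (1 : Matrix (Fin nβ) (Fin nβ) Λ)) * Rinv.map (algebraMap ℂ Λ) *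
          ((1 : Matrix (Fin nα) (Fin nα) Λ) ⊗ₖ V j) =
        ((1 : Matrix (Fin nα) (Fin nα) Λ) ⊗ₖ V j) *
          (U i ⊗ₖ (1 : Matrix (Fin nβ) (Fin nβ) Λ)))
    -- (c) consecutive-link exchange relation
    (hc : ∀ i j : Fin m, (i : ℕ) + 1 = (j : ℕ) →
      ((1 : Matrix (Fin nα) (Fin nα) Λ) ⊗ₖ V i) * R'inv.map (algebraMap ℂ Λ) *
          (U j ⊗ₖ (1 : Matrix (Fin nβ) (Fin nβ) Λ)) =
        (U j ⊗ₖ (1 : Matrix (Fin nβ) (Fin nβ) Λ)) *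
          ((1 : Matrix (Fin nα) (Fin nα) Λ) ⊗ₖ V i))
    -- (d) non-adjacent links commute entrywise
    (hd : ∀ i j : Fin m, ((i : ℕ) + 2 ≤ (j : ℕ) ∨ (j : ℕ) + 2 ≤ (i : ℕ)) →
      ∀ (p q : Fin nα) (r s : Fin nβ), Commute (U i p q) (V j r s)) :
    R.map (algebraMap ℂ Λ) *
        (((List.finRange m).map U).prod ⊗ₖ (1 : Matrix (Fin nβ) (Fin nβ) Λ)) *
        ((1 : Matrix (Fin nα) (Fin nα) Λ) ⊗ₖ ((List.finRange m).map V).prod) =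
      ((1 : Matrix (Fin nα) (Fin nα) Λ) ⊗ₖ ((List.finRange m).map V).prod) *
        (((List.finRange m).map U).prod ⊗ₖ (1 : Matrix (Fin nβ) (Fin nβ) Λ)) *
        R'.map (algebraMap ℂ Λ) :=
  holonomy_braid_relation_general nα nβ m hm U V R R' Rinv R'inv hRinv' hR'inv ha hb hc hd
end

section
/- Normalization of characters (Proposition 9, diagonal case). Let Λ be an associative unital ℂ-algebra, h : Λ → ℂ a ℂ-linear map with h(1) = 1, n ≥ 1, k ≥ 1, and μ ∈ Mₙ(ℂ) invertible with tr(μ) = tr(μ⁻¹) = d ≠ 0. Let U₁, …, U_k and V₁, …, V_k ∈ Mₙ(Λ). Assume the peeling (partial integration) property: for every j ∈ {1,…,k} and all A, B in the unital subalgebra of Λ generated by the entries of {Uᵢ, Vᵢ : i ≠ j}, and all indices, h( A · (U_j)^c_d · (V_j)^e_b · B ) = d⁻¹ · δ_{c,b} · (μ⁻¹)^e_d · h(A·B). Then h( tr(μ̂ · U₁ U₂ ⋯ U_k) · tr(μ̂ · V_k V_{k−1} ⋯ V₁) ) = 1, where μ̂ is the image of μ in Mₙ(Λ). -/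
open Finset

section Aux

variable {Λ : Type*} [Ring Λ] [Algebra ℂ Λ] {n : ℕ}

private lemma sum3_mul_sum3 {M : Type*} [NonUnitalNonAssocSemiring M]
    (f g : Fin n → Fin n → Fin n → M) :
    (∑ p, ∑ r, ∑ q, f p r q) * (∑ s, ∑ t, ∑ u, g s t u)
      = ∑ p, ∑ r, ∑ q, ∑ s, ∑ t, ∑ u, f p r q * g s t u := by
  rw [Finset.sum_mul]; refine Finset.sum_congr rfl fun p _ => ?_
  rw [Finset.sum_mul]; refine Finset.sum_congr rfl fun r _ => ?_
  rw [Finset.sum_mul]; refine Finset.sum_congr rfl fun q _ => ?_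
  rw [Finset.mul_sum]; refine Finset.sum_congr rfl fun s _ => ?_
  rw [Finset.mul_sum]; refine Finset.sum_congr rfl fun t _ => ?_
  rw [Finset.mul_sum]

private lemma entries_mul_mem (S : Subalgebra ℂ Λ) {M N : Matrix (Fin n) (Fin n) Λ}
    (hM : ∀ a b, M a b ∈ S) (hN : ∀ a b, N a b ∈ S) :
    ∀ a b, (M * N) a b ∈ S := by
  intro a b
  rw [Matrix.mul_apply]
  exact Subalgebra.sum_mem _ fun i _ => S.mul_mem (hM a i) (hN i b)

private lemma entries_one_mem (S : Subalgebra ℂ Λ) :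
    ∀ a b : Fin n, (1 : Matrix (Fin n) (Fin n) Λ) a b ∈ S := by
  intro a b
  rw [Matrix.one_apply]
  split
  exacts [S.one_mem, S.zero_mem]

private lemma entries_map_mem (S : Subalgebra ℂ Λ) (μ : Matrix (Fin n) (Fin n) ℂ) :
    ∀ a b : Fin n, (μ.map (algebraMap ℂ Λ)) a b ∈ S := by
  intro a b
  exact S.algebraMap_mem _

/-- single-trace peeling. -/
private lemma peel_trace
    (h : Λ →ₗ[ℂ] ℂ)
    (μinv : Matrix (Fin n) (Fin n) ℂ) (d : ℂ) (hd : d ≠ 0)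
    (htr' : Matrix.trace μinv = d)
    (S : Subalgebra ℂ Λ)
    (Uj Vj A B : Matrix (Fin n) (Fin n) Λ)
    (hA : ∀ a b, A a b ∈ S) (hB : ∀ a b, B a b ∈ S)
    (hp : ∀ A' B' : Λ, A' ∈ S → B' ∈ S → ∀ c d' e b : Fin n,
        h (A' * Uj c d' * Vj e b * B') =
          d⁻¹ * (if c = b then (1:ℂ) else 0) * μinv e d' * h (A' * B')) :
    h (Matrix.trace (A * Uj * Vj * B)) = h (Matrix.trace (A * B)) := by
  have e1 : Matrix.trace (A * Uj * Vj * B) =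
      ∑ x, ∑ b, ∑ c, ∑ e, A x c * Uj c e * Vj e b * B b x := by
    simp [Matrix.trace, Matrix.diag, Matrix.mul_apply, Finset.sum_mul, Finset.mul_sum, mul_assoc]
  have e2 : Matrix.trace (A * B) = ∑ x, ∑ c, A x c * B c x := by
    simp [Matrix.trace, Matrix.diag, Matrix.mul_apply]
  rw [e1, e2]
  simp only [map_sum]
  calc (∑ x, ∑ b, ∑ c, ∑ e, h (A x c * Uj c e * Vj e b * B b x))
      = ∑ x, ∑ b, ∑ c, ∑ e, d⁻¹ * (if c = b then (1:ℂ) else 0) * μinv e e * h (A x c * B b x) := by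
        refine Finset.sum_congr rfl fun x _ => Finset.sum_congr rfl fun b _ =>
          Finset.sum_congr rfl fun c _ => Finset.sum_congr rfl fun e _ => ?_
        exact hp _ _ (hA x c) (hB b x) c e e b
    _ = ∑ x, ∑ b, ∑ c, (if c = b then (1:ℂ) else 0) * h (A x c * B b x) := by
        refine Finset.sum_congr rfl fun x _ => Finset.sum_congr rfl fun b _ =>
          Finset.sum_congr rfl fun c _ => ?_
        have key : ∀ e, d⁻¹ * (if c = b then (1:ℂ) else 0) * μinv e e * h (A x c * B b x)
            = μinv e e * (d⁻¹ * (if c = b then (1:ℂ) else 0) * h (A x c * B b x)) := by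
          intro e; ring
        rw [Finset.sum_congr rfl fun e _ => key e, ← Finset.sum_mul,
          show (∑ e, μinv e e) = d from htr']
        field_simp
    _ = ∑ x, ∑ c, h (A x c * B c x) := by
        refine Finset.sum_congr rfl fun x _ => ?_
        rw [Finset.sum_comm]
        simp [ite_mul]

set_option maxHeartbeats 1000000 in
private lemma peel_two_traces
    (h : Λ →ₗ[ℂ] ℂ)
    (μ : Matrix (Fin n) (Fin n) ℂ) (hμ : μ * μ⁻¹ = 1)
    (d : ℂ) (hd : d ≠ 0)
    (S : Subalgebra ℂ Λ)
    (Uj Vj A B : Matrix (Fin n) (Fin n) Λ)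
    (hA : ∀ a b, A a b ∈ S) (hB : ∀ a b, B a b ∈ S)
    (hp : ∀ A' B' : Λ, A' ∈ S → B' ∈ S → ∀ c d' e b : Fin n,
        h (A' * Uj c d' * Vj e b * B') =
          d⁻¹ * (if c = b then (1:ℂ) else 0) * μ⁻¹ e d' * h (A' * B')) :
    h (Matrix.trace (μ.map (algebraMap ℂ Λ) * A * Uj) *
        Matrix.trace (μ.map (algebraMap ℂ Λ) * (Vj * B)))
      = d⁻¹ * h (Matrix.trace (μ.map (algebraMap ℂ Λ) * A * B)) := by
  have e1 : Matrix.trace (μ.map (algebraMap ℂ Λ) * A * Uj) =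
      ∑ p, ∑ r, ∑ q, μ p q • (A q r * Uj r p) := by
    simp [Matrix.trace, Matrix.diag, Matrix.mul_apply, Finset.sum_mul, Algebra.smul_def,
      mul_assoc, Matrix.map_apply]
  have e2 : Matrix.trace (μ.map (algebraMap ℂ Λ) * (Vj * B)) =
      ∑ s, ∑ t, ∑ u, μ s t • (Vj t u * B u s) := by
    simp [Matrix.trace, Matrix.diag, Matrix.mul_apply, Finset.sum_mul, Finset.mul_sum,
      Algebra.smul_def, mul_assoc, Matrix.map_apply]
  have e3 : Matrix.trace (μ.map (algebraMap ℂ Λ) * A * B) =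
      ∑ p, ∑ r, ∑ q, μ p q • (A q r * B r p) := by
    simp [Matrix.trace, Matrix.diag, Matrix.mul_apply, Finset.sum_mul, Algebra.smul_def,
      mul_assoc, Matrix.map_apply]
  have hmm : ∀ s p : Fin n, (∑ t, μ s t * μ⁻¹ t p) = if s = p then 1 else 0 := by
    intro s p
    have := congrArg (fun M => M s p) hμ
    simpa [Matrix.mul_apply, Matrix.one_apply] using this
  rw [e1, e2, e3, sum3_mul_sum3]
  simp only [map_sum, _root_.map_smul, smul_eq_mul, Finset.mul_sum]
  calc (∑ p, ∑ r, ∑ q, ∑ s, ∑ t, ∑ u,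
        h ((μ p q • (A q r * Uj r p)) * (μ s t • (Vj t u * B u s))))
      = ∑ p, ∑ r, ∑ q, ∑ s, ∑ t, ∑ u,
          μ p q * μ s t * (d⁻¹ * (if r = u then (1:ℂ) else 0) * μ⁻¹ t p * h (A q r * B u s)) := by
        refine Finset.sum_congr rfl fun p _ => Finset.sum_congr rfl fun r _ =>
          Finset.sum_congr rfl fun q _ => Finset.sum_congr rfl fun s _ =>
          Finset.sum_congr rfl fun t _ => Finset.sum_congr rfl fun u _ => ?_
        rw [smul_mul_smul_comm, _root_.map_smul, smul_eq_mul,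
          show A q r * Uj r p * (Vj t u * B u s) = A q r * Uj r p * Vj t u * B u s by
            simp [mul_assoc],
          hp _ _ (hA q r) (hB u s) r p t u]
    _ = ∑ p, ∑ r, ∑ q, ∑ s, ∑ t,
          (μ s t * μ⁻¹ t p) * (μ p q * (d⁻¹ * h (A q r * B r s))) := by
        refine Finset.sum_congr rfl fun p _ => Finset.sum_congr rfl fun r _ =>
          Finset.sum_congr rfl fun q _ => Finset.sum_congr rfl fun s _ =>
          Finset.sum_congr rfl fun t _ => ?_
        have key : ∀ u, μ p q * μ s t * (d⁻¹ * (if r = u then (1:ℂ) else 0) * μ⁻¹ t p * h (A q r * B u s))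
            = (if r = u then ((μ s t * μ⁻¹ t p) * (μ p q * (d⁻¹ * h (A q r * B u s)))) else 0) := by
          intro u
          by_cases hru : r = u <;> simp [hru] <;> ring
        rw [Finset.sum_congr rfl fun u _ => key u, Finset.sum_ite_eq]
        simp
    _ = ∑ p, ∑ r, ∑ q, μ p q * (d⁻¹ * h (A q r * B r p)) := by
        refine Finset.sum_congr rfl fun p _ => Finset.sum_congr rfl fun r _ =>
          Finset.sum_congr rfl fun q _ => ?_
        rw [show (∑ s, ∑ t, (μ s t * μ⁻¹ t p) * (μ p q * (d⁻¹ * h (A q r * B r s))))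
            = ∑ s, (∑ t, μ s t * μ⁻¹ t p) * (μ p q * (d⁻¹ * h (A q r * B r s))) from
          Finset.sum_congr rfl fun s _ => (Finset.sum_mul _ _ _).symm]
        rw [Finset.sum_congr rfl fun s _ => by rw [hmm s p]]
        simp [ite_mul]
    _ = ∑ p, ∑ r, ∑ q, d⁻¹ * (μ p q * h (A q r * B r p)) := by
        refine Finset.sum_congr rfl fun p _ => Finset.sum_congr rfl fun r _ =>
          Finset.sum_congr rfl fun q _ => by ring

private def pProd {k : ℕ} (U : Fin k → Matrix (Fin n) (Fin n) Λ) (m : ℕ) :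
    Matrix (Fin n) (Fin n) Λ :=
  (((List.finRange k).take m).map U).prod

private def qProd {k : ℕ} (V : Fin k → Matrix (Fin n) (Fin n) Λ) (m : ℕ) :
    Matrix (Fin n) (Fin n) Λ :=
  (((List.finRange k).take m).map V).reverse.prod

private lemma take_finRange_succ {k m : ℕ} (hm : m < k) :
    (List.finRange k).take (m + 1) = (List.finRange k).take m ++ [⟨m, hm⟩] := by
  rw [List.take_succ]
  congr
  rw [List.getElem?_eq_getElem (by simpa using hm)]
  simp [List.getElem_finRange]

private lemma pProd_succ {k : ℕ} (U : Fin k → Matrix (Fin n) (Fin n) Λ) {m : ℕ} (hm : m < k) :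
    pProd U (m + 1) = pProd U m * U ⟨m, hm⟩ := by
  simp [pProd, take_finRange_succ hm]

private lemma qProd_succ {k : ℕ} (V : Fin k → Matrix (Fin n) (Fin n) Λ) {m : ℕ} (hm : m < k) :
    qProd V (m + 1) = V ⟨m, hm⟩ * qProd V m := by
  simp [qProd, take_finRange_succ hm]

private abbrev peelAlg {Λ : Type*} [Ring Λ] [Algebra ℂ Λ] {n k : ℕ}
    (U V : Fin k → Matrix (Fin n) (Fin n) Λ) (j : Fin k) : Subalgebra ℂ Λ :=
  Algebra.adjoin ℂ {x : Λ | ∃ i : Fin k, i ≠ j ∧ ∃ a b : Fin n, x = U i a b ∨ x = V i a b}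

end Aux




/-!
STATEMENT 9: normalization of characters (Proposition 9, diagonal case).
Given a linear form h with h(1) = 1, an invertible μ with tr(μ) = tr(μ⁻¹) = d ≠ 0,
and link matrices U₁,…,U_k, V₁,…,V_k satisfying the peeling (partial integration)
property, one has h( tr(μ̂·U₁⋯U_k) · tr(μ̂·V_k⋯V₁) ) = 1.
-/

theorem character_normalization
    {Λ : Type*} [Ring Λ] [Algebra ℂ Λ]
    (h : Λ →ₗ[ℂ] ℂ) (hone : h 1 = 1)
    (n k : ℕ) (hn : 1 ≤ n) (hk : 1 ≤ k)
    (μ : Matrix (Fin n) (Fin n) ℂ) (hμ : IsUnit μ)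
    (d : ℂ) (hd : d ≠ 0)
    (htr : Matrix.trace μ = d) (htr' : Matrix.trace μ⁻¹ = d)
    (U V : Fin k → Matrix (Fin n) (Fin n) Λ)
    (hpeel : ∀ j : Fin k, ∀ A B : Λ,
      A ∈ Algebra.adjoin ℂ
          {x : Λ | ∃ i : Fin k, i ≠ j ∧ ∃ a b : Fin n, x = U i a b ∨ x = V i a b} →
      B ∈ Algebra.adjoin ℂ
          {x : Λ | ∃ i : Fin k, i ≠ j ∧ ∃ a b : Fin n, x = U i a b ∨ x = V i a b} →
      ∀ c d' e b : Fin n,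
        h (A * U j c d' * V j e b * B) =
          d⁻¹ * (if c = b then (1 : ℂ) else 0) * μ⁻¹ e d' * h (A * B)) :
    h (Matrix.trace (μ.map (algebraMap ℂ Λ) * ((List.finRange k).map U).prod) *
        Matrix.trace (μ.map (algebraMap ℂ Λ) * (((List.finRange k).map V).reverse).prod)) = 1 := by
  obtain ⟨k', rfl⟩ : ∃ k', k = k' + 1 := ⟨k - 1, (Nat.succ_pred_eq_of_pos hk).symm⟩
  have hμ1 : μ * μ⁻¹ = 1 := Matrix.mul_nonsing_inv μ ((Matrix.isUnit_iff_isUnit_det μ).mp hμ)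
  -- entries of partial products lie in the peeling subalgebras
  have hPmem : ∀ m (j : Fin (k' + 1)), m ≤ j.val → ∀ a b, pProd U m a b ∈ peelAlg U V j := by
    intro m
    induction m with
    | zero => intro j _ a b; simpa [pProd] using entries_one_mem (peelAlg U V j) a b
    | succ m ih =>
      intro j hmj a b
      have hm : m < k' + 1 := lt_of_lt_of_le (Nat.lt_succ_self m) (le_trans hmj j.isLt.le)
      rw [pProd_succ U hm]
      refine entries_mul_mem (peelAlg U V j) (ih j (by omega)) (fun a b => ?_) a b
      exact Algebra.subset_adjoin ⟨⟨m, hm⟩, Fin.ne_of_val_ne (by simp; omega), a, b, Or.inl rfl⟩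
  have hQmem : ∀ m (j : Fin (k' + 1)), m ≤ j.val → ∀ a b, qProd V m a b ∈ peelAlg U V j := by
    intro m
    induction m with
    | zero => intro j _ a b; simpa [qProd] using entries_one_mem (peelAlg U V j) a b
    | succ m ih =>
      intro j hmj a b
      have hm : m < k' + 1 := lt_of_lt_of_le (Nat.lt_succ_self m) (le_trans hmj j.isLt.le)
      rw [qProd_succ V hm]
      refine entries_mul_mem (peelAlg U V j) (fun a b => ?_) (ih j (by omega)) a b
      exact Algebra.subset_adjoin ⟨⟨m, hm⟩, Fin.ne_of_val_ne (by simp; omega), a, b, Or.inr rfl⟩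
  -- the merged-loop invariant
  have claim : ∀ m, m ≤ k' + 1 →
      h (Matrix.trace (μ.map (algebraMap ℂ Λ) * pProd U m * qProd V m)) = d := by
    intro m
    induction m with
    | zero =>
      intro _
      have tr1 : Matrix.trace (μ.map (algebraMap ℂ Λ)) = algebraMap ℂ Λ d := by
        rw [← htr]
        simp [Matrix.trace, Matrix.diag, Matrix.map_apply, map_sum]
      simp only [pProd, qProd, List.take_zero, List.map_nil, List.prod_nil, List.reverse_nil,
        mul_one, tr1]
      rw [Algebra.algebraMap_eq_smul_one, map_smul, smul_eq_mul, hone, mul_one]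
    | succ m ih =>
      intro hmk
      have hm : m < k' + 1 := hmk
      set jm : Fin (k' + 1) := ⟨m, hm⟩ with hjm
      rw [pProd_succ U hm, qProd_succ V hm]
      have assoc : μ.map (algebraMap ℂ Λ) * (pProd U m * U jm) * (V jm * qProd V m)
          = (μ.map (algebraMap ℂ Λ) * pProd U m) * U jm * V jm * qProd V m := by
        simp only [Matrix.mul_assoc]
      rw [assoc]
      have hA : ∀ a b, (μ.map (algebraMap ℂ Λ) * pProd U m) a b ∈ peelAlg U V jm :=
        entries_mul_mem (peelAlg U V jm) (entries_map_mem (peelAlg U V jm) μ) (hPmem m jm (le_refl m))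
      have hB : ∀ a b, qProd V m a b ∈ peelAlg U V jm := hQmem m jm (le_refl m)
      rw [peel_trace h μ⁻¹ d hd htr' (peelAlg U V jm) (U jm) (V jm) _ _ hA hB
        (fun A' B' hA' hB' => hpeel jm A' B' hA' hB')]
      exact ih (le_of_lt hm)
  -- assemble
  have hfull : ((List.finRange (k' + 1)).map U).prod = pProd U (k' + 1) := by
    rw [pProd, List.take_of_length_le (by simp)]
  have hfull' : ((List.finRange (k' + 1)).map V).reverse.prod = qProd V (k' + 1) := by
    rw [qProd, List.take_of_length_le (by simp)]
  have hk1 : k' < k' + 1 := Nat.lt_succ_self k'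
  set jk : Fin (k' + 1) := ⟨k', hk1⟩ with hjk
  rw [hfull, hfull', pProd_succ U hk1, qProd_succ V hk1,
    show μ.map (algebraMap ℂ Λ) * (pProd U k' * U jk)
      = μ.map (algebraMap ℂ Λ) * pProd U k' * U jk from (Matrix.mul_assoc _ _ _).symm]
  rw [peel_two_traces h μ hμ1 d hd (peelAlg U V jk) (U jk) (V jk) _ _
    (hPmem k' jk (le_refl _)) (hQmem k' jk (le_refl _))
    (fun A' B' hA' hB' => hpeel jk A' B' hA' hB')]
  rw [claim k' (by omega)]
  exact inv_mul_cancel₀ hd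
end

section
/- Fusion of characters (Proposition 13, matrix form). Let Λ be an associative unital ℂ-algebra, n_α, n_β ≥ 1, let 𝒢 be a finite index set, and for each γ ∈ 𝒢 let n_γ ≥ 1 and N_γ ≥ 1. Let M_α ∈ M_{n_α}(Λ), M_β ∈ M_{n_β}(Λ), M_γ ∈ M_{n_γ}(Λ) for γ ∈ 𝒢; let μ_α ∈ M_{n_α}(ℂ), μ_β ∈ M_{n_β}(ℂ), μ_γ ∈ M_{n_γ}(ℂ); and let φ^{γ,m} ∈ M_{n_α n_β × n_γ}(ℂ), ψ^{γ,m} ∈ M_{n_γ × n_α n_β}(ℂ) for m = 1,…,N_γ. Assume: (i) (M_α)₁ · (M_β)₂ = Σ_{γ∈𝒢} Σ_{m=1}^{N_γ} φ^{γ,m} · M_γ · ψ^{γ,m} in M_{n_α n_β}(Λ); (ii) (μ_α ⊗ μ_β) · φ^{γ,m} = φ^{γ,m} · μ_γ for all γ, m; (iii) ψ^{γ,m} · φ^{γ,m} = 1_{n_γ} for all γ, m. Then the quantum characters χ_α := tr(μ̂_α M_α), χ_β := tr(μ̂_β M_β) and χ_γ := tr(μ̂_γ M_γ) satisfy the fusion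 rule χ_α · χ_β = Σ_{γ∈𝒢} N_γ · χ_γ in Λ. -/
open scoped Kronecker

section aux
variable {Λ : Type*} [Ring Λ] [Algebra ℂ Λ]

lemma trace_map_mul_comm' {p q : Type*} [Fintype p] [Fintype q]
    (C : Matrix p q ℂ) (Z : Matrix q p Λ) :
    (C.map (algebraMap ℂ Λ) * Z).trace = (Z * C.map (algebraMap ℂ Λ)).trace := by
  simp only [Matrix.trace, Matrix.diag, Matrix.mul_apply, Matrix.map_apply]
  rw [Finset.sum_comm]
  simp [Algebra.commutes]

lemma kron_map {p q r s : Type*} (C : Matrix p q ℂ) (D : Matrix r s ℂ) :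
    ((C ⊗ₖ D).map (algebraMap ℂ Λ)) = C.map (algebraMap ℂ Λ) ⊗ₖ D.map (algebraMap ℂ Λ) := by
  ext ⟨i, j⟩ ⟨k, l⟩
  simp [Matrix.kroneckerMap_apply]

lemma kron_one_mul_one_kron {p q : Type*} [Fintype p] [Fintype q] [DecidableEq p] [DecidableEq q]
    (A : Matrix p p Λ) (B : Matrix q q Λ) :
    (A ⊗ₖ (1 : Matrix q q Λ)) * ((1 : Matrix p p Λ) ⊗ₖ B) = A ⊗ₖ B := by
  ext ⟨i, j⟩ ⟨k, l⟩
  simp [Matrix.mul_apply, Matrix.kroneckerMap_apply, Matrix.one_apply,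
    Fintype.sum_prod_type, ite_mul, mul_ite, Finset.sum_ite_eq, Finset.sum_ite_eq']

lemma kron_central_mul {p q : Type*} [Fintype p] [Fintype q]
    (C : Matrix p p ℂ) (D : Matrix q q ℂ) (A : Matrix p p Λ) (B : Matrix q q Λ) :
    (C.map (algebraMap ℂ Λ) ⊗ₖ D.map (algebraMap ℂ Λ)) * (A ⊗ₖ B) =
      (C.map (algebraMap ℂ Λ) * A) ⊗ₖ (D.map (algebraMap ℂ Λ) * B) := by
  ext ⟨i, j⟩ ⟨k, l⟩
  simp only [Matrix.mul_apply, Matrix.kroneckerMap_apply, Matrix.map_apply,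
    Fintype.sum_prod_type, Finset.sum_mul, Finset.mul_sum]
  rw [Finset.sum_comm]
  apply Finset.sum_congr rfl; intro a _
  apply Finset.sum_congr rfl; intro b _
  rw [mul_assoc, mul_assoc]
  congr 1
  rw [← mul_assoc, Algebra.commutes (D j a) (A b k), mul_assoc]

lemma trace_kron' {p q : Type*} [Fintype p] [Fintype q]
    (X : Matrix p p Λ) (Y : Matrix q q Λ) :
    (X ⊗ₖ Y).trace = X.trace * Y.trace := by
  simp only [Matrix.trace, Matrix.diag, Matrix.kroneckerMap_apply, Fintype.sum_prod_type,
    Finset.sum_mul, Finset.mul_sum]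
  rw [Finset.sum_comm]
end aux

theorem fusion_of_characters
    {Λ : Type*} [Ring Λ] [Algebra ℂ Λ]
    (nα nβ : ℕ) (hnα : 1 ≤ nα) (hnβ : 1 ≤ nβ)
    {𝒢 : Type*} [Fintype 𝒢]
    (n N : 𝒢 → ℕ) (hn : ∀ γ, 1 ≤ n γ) (hN : ∀ γ, 1 ≤ N γ)
    (Mα : Matrix (Fin nα) (Fin nα) Λ) (Mβ : Matrix (Fin nβ) (Fin nβ) Λ)
    (Mγ : (γ : 𝒢) → Matrix (Fin (n γ)) (Fin (n γ)) Λ)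
    (μα : Matrix (Fin nα) (Fin nα) ℂ) (μβ : Matrix (Fin nβ) (Fin nβ) ℂ)
    (μγ : (γ : 𝒢) → Matrix (Fin (n γ)) (Fin (n γ)) ℂ)
    (φ : (γ : 𝒢) → Fin (N γ) → Matrix (Fin nα × Fin nβ) (Fin (n γ)) ℂ)
    (ψ : (γ : 𝒢) → Fin (N γ) → Matrix (Fin (n γ)) (Fin nα × Fin nβ) ℂ)
    (hdec : (Mα ⊗ₖ (1 : Matrix (Fin nβ) (Fin nβ) Λ)) *
          ((1 : Matrix (Fin nα) (Fin nα) Λ) ⊗ₖ Mβ) =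
        ∑ γ : 𝒢, ∑ m : Fin (N γ),
          (φ γ m).map (algebraMap ℂ Λ) * Mγ γ * (ψ γ m).map (algebraMap ℂ Λ))
    (hgl : ∀ (γ : 𝒢) (m : Fin (N γ)), (μα ⊗ₖ μβ) * φ γ m = φ γ m * μγ γ)
    (hψφ : ∀ (γ : 𝒢) (m : Fin (N γ)), ψ γ m * φ γ m = 1) :
    Matrix.trace (μα.map (algebraMap ℂ Λ) * Mα) *
        Matrix.trace (μβ.map (algebraMap ℂ Λ) * Mβ) =
      ∑ γ : 𝒢, (N γ : Λ) * Matrix.trace ((μγ γ).map (algebraMap ℂ Λ) * Mγ γ) := by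
  have key : Matrix.trace (μα.map (algebraMap ℂ Λ) * Mα) *
        Matrix.trace (μβ.map (algebraMap ℂ Λ) * Mβ) =
      Matrix.trace (((μα ⊗ₖ μβ).map (algebraMap ℂ Λ)) *
        ((Mα ⊗ₖ (1 : Matrix (Fin nβ) (Fin nβ) Λ)) *
          ((1 : Matrix (Fin nα) (Fin nα) Λ) ⊗ₖ Mβ))) := by
    rw [kron_one_mul_one_kron, kron_map, kron_central_mul, trace_kron']
  rw [key, hdec, Finset.mul_sum, Matrix.trace_sum]
  apply Finset.sum_congr rfl; intro γ _
  rw [Finset.mul_sum, Matrix.trace_sum]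
  have hterm : ∀ m : Fin (N γ),
      Matrix.trace (((μα ⊗ₖ μβ).map (algebraMap ℂ Λ)) *
        ((φ γ m).map (algebraMap ℂ Λ) * Mγ γ * (ψ γ m).map (algebraMap ℂ Λ))) =
      Matrix.trace ((μγ γ).map (algebraMap ℂ Λ) * Mγ γ) := by
    intro m
    rw [← Matrix.mul_assoc, ← Matrix.mul_assoc, ← Matrix.map_mul, hgl γ m, Matrix.map_mul,
      ← trace_map_mul_comm' (ψ γ m), ← Matrix.mul_assoc, ← Matrix.mul_assoc, ← Matrix.map_mul,
      hψφ γ m, Matrix.map_one _ (map_zero _) (map_one _), Matrix.one_mul]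
  simp only [hterm]
  rw [Finset.sum_const, Finset.card_univ, Fintype.card_fin, nsmul_eq_mul]
end
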